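/- Fix primitive types l and r and for any type A of L^∘ set A^□ := (l\((l·A)·r))/r. Then: (i) for every type A, the sequent A → A^□ is derivable in L^∘; (ii) for all types A and B, if A → B is derivable in L^∘ then A^□ → B^□ is derivable in L^∘. -/

import Mathlib

/-- Types of the Lambek calculus with the cyclic shift `L^∘`, built from
primitive types `P` by `\` (`ldiv A B = A \ B`), `/` (`rdiv B A = B / A`),
`·` (`mul`) and the cyclic shift `^∘` (`circ`). -/
inductive Fm (P : Type) : Type
  | prim : P → Fm P
  | ldiv : Fm P → Fm P → Fm P
  | rdiv : Fm P → Fm P → Fm P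
  | mul  : Fm P → Fm P → Fm P
  | circ : Fm P → Fm P
deriving DecidableEq

open Fm

/-- Derivability of sequents in the Lambek calculus with the cyclic shift `L^∘`.
The Boolean flag indicates whether the rule (cut) may be used:
`Dv P true` is `L^∘` (with cut), `Dv P false` is its cut-free part. -/
inductive Dv (P : Type) : Bool → List (Fm P) → Fm P → Prop
  | ax (c : Bool) (A : Fm P) :
      Dv P c [A] A
  | ldivL (c : Bool) (Γ Δ Pi : List (Fm P)) (A B C : Fm P) :
      Dv P c (Γ ++ B :: Δ) C → Dv P c Pi A → Pi ≠ [] →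
      Dv P c (Γ ++ Pi ++ ldiv A B :: Δ) C
  | ldivR (c : Bool) (Pi : List (Fm P)) (A B : Fm P) :
      Dv P c (A :: Pi) B → Pi ≠ [] →
      Dv P c Pi (ldiv A B)
  | rdivL (c : Bool) (Γ Δ Pi : List (Fm P)) (A B C : Fm P) :
      Dv P c (Γ ++ B :: Δ) C → Dv P c Pi A → Pi ≠ [] →
      Dv P c (Γ ++ rdiv B A :: (Pi ++ Δ)) C
  | rdivR (c : Bool) (Pi : List (Fm P)) (A B : Fm P) :
      Dv P c (Pi ++ [A]) B → Pi ≠ [] →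
      Dv P c Pi (rdiv B A)
  | mulL (c : Bool) (Γ Δ : List (Fm P)) (A B C : Fm P) :
      Dv P c (Γ ++ A :: B :: Δ) C →
      Dv P c (Γ ++ mul A B :: Δ) C
  | mulR (c : Bool) (Pi Psi : List (Fm P)) (A B : Fm P) :
      Dv P c Pi A → Dv P c Psi B → Pi ≠ [] → Psi ≠ [] →
      Dv P c (Pi ++ Psi) (mul A B)
  | circR (c : Bool) (Pi : List (Fm P)) (A : Fm P) :
      Dv P c Pi A →
      Dv P c Pi (circ A)
  | circL (c : Bool) (A B : Fm P) :
      Dv P c [B] (circ A) →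
      Dv P c [circ B] (circ A)
  | circC (c : Bool) (Pi Psi : List (Fm P)) (A : Fm P) :
      Dv P c (Pi ++ Psi) (circ A) → Pi ≠ [] → Psi ≠ [] →
      Dv P c (Psi ++ Pi) (circ A)
  | cut (Γ Δ Pi : List (Fm P)) (A B : Fm P) :
      Dv P true Pi A → Dv P true (Γ ++ A :: Δ) B → Pi ≠ [] →
      Dv P true (Γ ++ Pi ++ Δ) B

/-- `A^□ := (l \ ((l·A)·r)) / r`. -/
def fbox {P : Type} (l r : P) (A : Fm P) : Fm P :=
  Fm.rdiv (Fm.ldiv (Fm.prim l) (Fm.mul (Fm.mul (Fm.prim l) A) (Fm.prim r))) (Fm.prim r)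


/-! `A^□` is the double residual of the bracketing `l, A, r → (l·A)·r`: (→/), (→\) turn a
bracketing of `Π` into `Π → A^□`, and (/→), (\→) unfold `l, A^□, r` back to `(l·A)·r`. Both
claims thus reduce to `l, A, r → (l·B)·r`, which follows from `A → B` by (→·) alone, so
neither needs (cut). -/

namespace Dv

variable {P : Type} {c : Bool}

theorem bracket {Pi : List (Fm P)} {B : Fm P} (X Y : Fm P) (h : Dv P c Pi B) (hPi : Pi ≠ []) :
    Dv P c (X :: Pi ++ [Y]) (mul (mul X B) Y) :=
  mulR c (X :: Pi) [Y] _ _ (mulR c [X] Pi _ _ (ax c X) h (List.cons_ne_nil _ _) hPi)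
    (ax c Y) (List.cons_ne_nil _ _) (List.cons_ne_nil _ _)

theorem fbox_of_bracket {l r : P} {Pi : List (Fm P)} {A : Fm P}
    (h : Dv P c (prim l :: Pi ++ [prim r]) (mul (mul (prim l) A) (prim r))) (hPi : Pi ≠ []) :
    Dv P c Pi (fbox l r A) :=
  rdivR c Pi _ _ (ldivR c (Pi ++ [prim r]) _ _ h (by simp)) hPi

theorem bracket_fbox {l r : P} {A C : Fm P} (h : Dv P c [mul (mul (prim l) A) (prim r)] C) :
    Dv P c [prim l, fbox l r A, prim r] C :=
  rdivL c [prim l] [] [prim r] _ _ C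
    (ldivL c [] [] [prim l] _ _ C h (ax c _) (List.cons_ne_nil _ _))
    (ax c _) (List.cons_ne_nil _ _)

theorem self_fbox (l r : P) (A : Fm P) : Dv P c [A] (fbox l r A) :=
  fbox_of_bracket (bracket _ _ (ax c A) (List.cons_ne_nil _ _)) (List.cons_ne_nil _ _)

theorem fbox_mono {l r : P} {A B : Fm P} (h : Dv P c [A] B) :
    Dv P c [fbox l r A] (fbox l r B) :=
  fbox_of_bracket (bracket_fbox (mulL c [] [] _ _ _ (mulL c [] [_] _ _ _
    (bracket (prim l) (prim r) h (List.cons_ne_nil _ _))))) (List.cons_ne_nil _ _)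

end Dv

/-- For primitive types `l`, `r`: (i) `A → A^□` is derivable in `L^∘`;
(ii) if `A → B` is derivable in `L^∘` then so is `A^□ → B^□`. -/
theorem box_lemma (P : Type) (l r : P) :
    (∀ A : Fm P, Dv P true [A] (fbox l r A)) ∧
    (∀ A B : Fm P, Dv P true [A] B → Dv P true [fbox l r A] (fbox l r B)) :=
  ⟨Dv.self_fbox l r, fun _ _ => Dv.fbox_mono⟩
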